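/- If there is a polynomial-time (or simply computable) decision procedure for the existence of a Nash stable partition in B-hedonic games with no unacceptability (every player weakly prefers every other player to himself), then the existence of a Nash stable partition in arbitrary B-hedonic games is decidable by the same procedure applied to the modified profile in which each unacceptable player j (with i ≻ᵢ j) is made exactly indifferent to i. Concretely: a partition is Nash stable in the original B-hedonic game if and only if it is Nash stable in the modified game. -/

import Mathlib

open Finset

/-- A partition of the player set into coalitions: `part i` is the coalition
containing player `i`. -/
structure HPartition (N : Type*) where
  part : N → Finset N
  mem_self : ∀ i, i ∈ part i
  eq_of_mem : ∀ i j : N, j ∈ part i → part j = part i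

section Defs

variable {N : Type*} [DecidableEq N]

/-- Strict part of a weak preference over coalitions. -/
def SPref (pref : N → Finset N → Finset N → Prop) (i : N) (S T : Finset N) : Prop :=
  pref i S T ∧ ¬ pref i T S

/-- `S` is an (existing or empty) coalition of the partition `π`. -/
def IsCoalitionOf (π : HPartition N) (S : Finset N) : Prop :=
  S = ∅ ∨ ∃ j, S = π.part j

/-- Nash stability: no player strictly prefers joining another existing
(possibly empty) coalition. -/
def NashStable (pref : N → Finset N → Finset N → Prop) (π : HPartition N) : Prop :=
  ∀ i S, IsCoalitionOf π S → S ≠ π.part i →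
    ¬ SPref pref i (insert i S) (π.part i)

/-- Individual stability: no strictly improving move that all members of the
joined coalition weakly approve. -/
def IndStable (pref : N → Finset N → Finset N → Prop) (π : HPartition N) : Prop :=
  ∀ i S, IsCoalitionOf π S → S ≠ π.part i →
    ¬ (SPref pref i (insert i S) (π.part i) ∧ ∀ j ∈ S, pref j (insert i S) S)

/-- Contractual individual stability: no strictly improving move approved by the
joined coalition and by the abandoned coalition. -/
def ContIndStable (pref : N → Finset N → Finset N → Prop) (π : HPartition N) : Prop :=
  ∀ i S, IsCoalitionOf π S → S ≠ π.part i →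
    ¬ (SPref pref i (insert i S) (π.part i) ∧ (∀ j ∈ S, pref j (insert i S) S) ∧
        (∀ j ∈ π.part i, j ≠ i → pref j ((π.part i).erase i) (π.part i)))

/-- Individual rationality: everyone weakly prefers his coalition to being alone. -/
def IndRational (pref : N → Finset N → Finset N → Prop) (π : HPartition N) : Prop :=
  ∀ i, pref i (π.part i) {i}

/-- A CIS deviation from `π` to `π'`: player `i` moves to the (possibly empty)
existing coalition `T`, strictly improving, while no member of `T` nor of the
abandoned coalition is worse off. -/
def CISDeviation (pref : N → Finset N → Finset N → Prop) (π π' : HPartition N) : Prop :=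
  ∃ i T, IsCoalitionOf π T ∧ T ≠ π.part i ∧ i ∉ T ∧
    SPref pref i (insert i T) (π.part i) ∧
    (∀ j ∈ T, pref j (insert i T) T) ∧
    (∀ j ∈ π.part i, j ≠ i → pref j ((π.part i).erase i) (π.part i)) ∧
    (∀ k, π'.part k = if k = i ∨ k ∈ T then insert i T else (π.part k).erase i)

/-- The weak relation associated with a (primitive) strict relation. -/
def weakOf (sp : N → Finset N → Finset N → Prop) (i : N) (S T : Finset N) : Prop :=
  ¬ sp i T S

/-- Strict part of a weak preference over players. -/
def strictP (p : N → N → N → Prop) (i j k : N) : Prop := p i j k ∧ ¬ p i k j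

/-- Player `j` is unacceptable to `i`: `i ≻ᵢ j`. -/
def unacc (p : N → N → N → Prop) (i j : N) : Prop := strictP p i i j

/-- Player `i` likes `j`: `j ≻ᵢ i`. -/
def likes (p : N → N → N → Prop) (i j : N) : Prop := strictP p i j i

/-- Each player's preference over players is a complete preorder. -/
def CompletePreorder (p : N → N → N → Prop) : Prop :=
  (∀ i j k, p i j k ∨ p i k j) ∧ (∀ i a b c, p i a b → p i b c → p i a c)

/-- The set of `≿ᵢ`-maximal elements of `J`, with `max ∅ = {i}`. -/
def maxSet (p : N → N → N → Prop) (i : N) (J : Finset N) : Set N :=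
  if J = ∅ then {i} else {m | m ∈ J ∧ ∀ j ∈ J, p i m j}

/-- The set of `≿ᵢ`-minimal elements of `J`, with `min ∅ = {i}`. -/
def minSet (p : N → N → N → Prop) (i : N) (J : Finset N) : Set N :=
  if J = ∅ then {i} else {m | m ∈ J ∧ ∀ j ∈ J, p i j m}

/-- W-hedonic (weak) preference over coalitions: compare worst members. -/
def WPref (p : N → N → N → Prop) (i : N) (S T : Finset N) : Prop :=
  ∀ s ∈ minSet p i (S.erase i), ∀ t ∈ minSet p i (T.erase i), p i s t

/-- WW-hedonic (weak) preference over coalitions. -/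
def WWPref (p : N → N → N → Prop) (i : N) (S T : Finset N) : Prop :=
  (∃ j ∈ T.erase i, unacc p i j) ∨ WPref p i S T

/-- BB-hedonic (weak) preference over coalitions. -/
def BBPref (p : N → N → N → Prop) (i : N) (S T : Finset N) : Prop :=
  (∃ j ∈ T.erase i, unacc p i j) ∨
    ((∀ j ∈ S.erase i, ¬ unacc p i j) ∧ (∀ j ∈ T.erase i, ¬ unacc p i j) ∧
      ∀ s ∈ maxSet p i (S.erase i), ∀ t ∈ maxSet p i (T.erase i), p i s t)

/-- B-hedonic strict preference over coalitions: better best member, or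
indifferent best members and smaller size. -/
def BStrict (p : N → N → N → Prop) (i : N) (S T : Finset N) : Prop :=
  (∀ s ∈ maxSet p i (S.erase i), ∀ t ∈ maxSet p i (T.erase i), strictP p i s t) ∨
    ((∀ s ∈ maxSet p i (S.erase i), ∀ t ∈ maxSet p i (T.erase i), p i s t ∧ p i t s) ∧
      S.card < T.card)

/-- B-hedonic weak preference over coalitions. -/
def BWeak (p : N → N → N → Prop) : N → Finset N → Finset N → Prop :=
  weakOf (BStrict p)

end Defs

/-! In a B-hedonic game player `i` compares coalitions through his best partner in them.
If the best partner `m` in his own coalition is unacceptable, `i` strictly gains by leaving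
alone under `≿ᵢ`, and under `≿'ᵢ`, where `m ∼'ᵢ i`, he still gains, since being alone is
then as good and strictly smaller. If `m` is acceptable, a profitable move goes to a
coalition whose best member is acceptable as well, and on acceptable players `≿ᵢ` and `≿'ᵢ`
agree; the one exception, a `≿'ᵢ`-move to a coalition of unacceptable players rated like
`m`, is matched by the `≿ᵢ`-move of leaving alone. -/

section BHedonic

variable {N : Type*} {p : N → N → N → Prop} {i : N}

namespace CompletePreorder

theorem refl (hp : CompletePreorder p) (i j : N) : p i j j :=
  (hp.1 i j j).elim id id

theorem trans (hp : CompletePreorder p) {a b c : N} : p i a b → p i b c → p i a c :=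
  hp.2 i a b c

theorem not_unacc_self (hp : CompletePreorder p) (i : N) : ¬ unacc p i i :=
  fun h => h.2 (hp.refl i i)

theorem pref_self_of_not_unacc (hp : CompletePreorder p) {j : N} (h : ¬ unacc p i j) :
    p i j i := by
  by_contra hji
  exact h ⟨(hp.1 i j i).resolve_left hji, hji⟩

theorem pref_congr (hp : CompletePreorder p) {a a' b b' : N} (ha : p i a a') (ha' : p i a' a)
    (hb : p i b b') (hb' : p i b' b) : p i a b ↔ p i a' b' :=
  ⟨fun h => hp.trans ha' (hp.trans h hb), fun h => hp.trans ha (hp.trans h hb')⟩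

end CompletePreorder

variable [DecidableEq N]

theorem maxSet_empty : maxSet p i ∅ = {i} := by
  simp [maxSet]

theorem mem_maxSet_of_ne_empty {J : Finset N} {m : N} (hJ : J ≠ ∅) :
    m ∈ maxSet p i J ↔ m ∈ J ∧ ∀ j ∈ J, p i m j := by
  simp [maxSet, hJ]

theorem self_mem_maxSet_erase_singleton : i ∈ maxSet p i (({i} : Finset N).erase i) := by
  simp [maxSet_empty]

theorem one_lt_card_of_mem_maxSet_erase {Y : Finset N} {m : N} (hiY : i ∈ Y)
    (hm : m ∈ maxSet p i (Y.erase i)) (hmi : m ≠ i) : 1 < Y.card := by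
  have hY : Y.erase i ≠ ∅ := by
    rintro hY
    rw [hY, maxSet_empty] at hm
    exact hmi hm
  have hmY := ((mem_maxSet_of_ne_empty hY).1 hm).1
  exact one_lt_card.2 ⟨i, hiY, m, mem_of_mem_erase hmY, (ne_of_mem_erase hmY).symm⟩

namespace CompletePreorder

theorem exists_mem_maxSet (hp : CompletePreorder p) (i : N) (J : Finset N) :
    ∃ m, m ∈ maxSet p i J := by
  rcases J.eq_empty_or_nonempty with rfl | hJ
  · exact ⟨i, by simp [maxSet_empty]⟩
  suffices ∃ m ∈ J, ∀ j ∈ J, p i m j by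
    obtain ⟨m, hm⟩ := this
    exact ⟨m, (mem_maxSet_of_ne_empty hJ.ne_empty).2 hm⟩
  induction hJ using Nonempty.cons_induction with
  | singleton a =>
    exact ⟨a, mem_singleton_self a, fun j hj => mem_singleton.1 hj ▸ hp.refl i a⟩
  | cons a s _ _ ih =>
    obtain ⟨m, hms, hm⟩ := ih
    rcases hp.1 i a m with ham | hma
    · exact ⟨a, mem_cons_self a s, fun j hj => (mem_cons.1 hj).elim
        (fun h => h ▸ hp.refl i a) (fun hj => hp.trans ham (hm j hj))⟩
    · exact ⟨m, mem_cons_of_mem hms, fun j hj => (mem_cons.1 hj).elim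
        (fun h => h ▸ hma) (hm j)⟩

theorem pref_of_mem_maxSet (hp : CompletePreorder p) {J : Finset N} {m m' : N}
    (hm : m ∈ maxSet p i J) (hm' : m' ∈ maxSet p i J) : p i m m' := by
  rcases eq_or_ne J ∅ with rfl | hJ
  · rw [maxSet_empty] at hm hm'
    rw [hm, hm']
    exact hp.refl i i
  · exact ((mem_maxSet_of_ne_empty hJ).1 hm).2 m' ((mem_maxSet_of_ne_empty hJ).1 hm').1

theorem bStrict_iff (hp : CompletePreorder p) {X Y : Finset N} {mX mY : N}
    (hX : mX ∈ maxSet p i (X.erase i)) (hY : mY ∈ maxSet p i (Y.erase i)) :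
    BStrict p i X Y ↔ strictP p i mX mY ∨ (p i mX mY ∧ p i mY mX) ∧ X.card < Y.card := by
  have key : ∀ s ∈ maxSet p i (X.erase i), ∀ t ∈ maxSet p i (Y.erase i),
      (p i s t ↔ p i mX mY) ∧ (p i t s ↔ p i mY mX) := fun s hs t ht =>
    ⟨hp.pref_congr (hp.pref_of_mem_maxSet hs hX) (hp.pref_of_mem_maxSet hX hs)
        (hp.pref_of_mem_maxSet ht hY) (hp.pref_of_mem_maxSet hY ht),
      hp.pref_congr (hp.pref_of_mem_maxSet ht hY) (hp.pref_of_mem_maxSet hY ht)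
        (hp.pref_of_mem_maxSet hs hX) (hp.pref_of_mem_maxSet hX hs)⟩
  unfold BStrict strictP
  constructor
  · rintro (h | ⟨h, hc⟩)
    exacts [Or.inl (h mX hX mY hY), Or.inr ⟨h mX hX mY hY, hc⟩]
  · rintro (h | ⟨h, hc⟩)
    · exact Or.inl fun s hs t ht => by rw [(key s hs t ht).1, (key s hs t ht).2]; exact h
    · exact Or.inr ⟨fun s hs t ht => by rw [(key s hs t ht).1, (key s hs t ht).2]; exact h, hc⟩

theorem sPref_bWeak_iff (hp : CompletePreorder p) {X Y : Finset N} {mX mY : N}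
    (hX : mX ∈ maxSet p i (X.erase i)) (hY : mY ∈ maxSet p i (Y.erase i)) :
    SPref (BWeak p) i X Y ↔
      strictP p i mX mY ∨ p i mX mY ∧ p i mY mX ∧ X.card < Y.card := by
  unfold SPref BWeak weakOf
  rw [hp.bStrict_iff hX hY, hp.bStrict_iff hY hX, not_not]
  have := @Nat.lt_asymm X.card Y.card
  unfold strictP
  tauto

end CompletePreorder

end BHedonic

section Modification

variable {N : Type*} {p p' : N → N → N → Prop} {i : N}

open Classical in
def IsUnaccModification (p p' : N → N → N → Prop) : Prop :=
  ∀ i j k, p' i j k ↔ p i (if unacc p i j then i else j) (if unacc p i k then i else k)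

namespace IsUnaccModification

theorem iff_of_not_unacc (hp' : IsUnaccModification p p') {j k : N} (hj : ¬ unacc p i j)
    (hk : ¬ unacc p i k) : p' i j k ↔ p i j k := by
  rw [hp', if_neg hj, if_neg hk]

theorem indiff_self_of_unacc (hp' : IsUnaccModification p p') (hp : CompletePreorder p)
    {j : N} (hj : unacc p i j) : p' i i j ∧ p' i j i := by
  rw [hp' i i j, hp' i j i, if_pos hj, if_neg (hp.not_unacc_self i)]
  exact ⟨hp.refl i i, hp.refl i i⟩

theorem pref_of_pref (hp' : IsUnaccModification p p') (hp : CompletePreorder p) {j k : N}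
    (h : p i j k) : p' i j k := by
  by_cases hj : unacc p i j
  · have hk : unacc p i k := ⟨hp.trans hj.1 h, fun hki => hj.2 (hp.trans h hki)⟩
    rw [hp', if_pos hj, if_pos hk]
    exact hp.refl i i
  · by_cases hk : unacc p i k
    · rw [hp', if_neg hj, if_pos hk]
      exact hp.pref_self_of_not_unacc hj
    · exact (hp'.iff_of_not_unacc hj hk).2 h

theorem completePreorder (hp' : IsUnaccModification p p') (hp : CompletePreorder p) :
    CompletePreorder p' :=
  ⟨fun i j k => by rw [hp', hp']; exact hp.1 i _ _,
    fun i a b c => by rw [hp', hp', hp']; exact hp.2 i _ _ _⟩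

theorem mem_maxSet [DecidableEq N] (hp' : IsUnaccModification p p') (hp : CompletePreorder p)
    {J : Finset N} {m : N} (hm : m ∈ maxSet p i J) : m ∈ maxSet p' i J := by
  rcases eq_or_ne J ∅ with rfl | hJ
  · rwa [maxSet_empty] at hm ⊢
  · rw [mem_maxSet_of_ne_empty hJ] at hm ⊢
    exact ⟨hm.1, fun j hj => hp'.pref_of_pref hp (hm.2 j hj)⟩

end IsUnaccModification

end Modification

section Deviation

variable {N : Type*} [DecidableEq N]

def HasNashDeviation (pref : N → Finset N → Finset N → Prop) (π : HPartition N) (i : N) :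
    Prop :=
  ∃ S, IsCoalitionOf π S ∧ S ≠ π.part i ∧ SPref pref i (insert i S) (π.part i)

theorem nashStable_iff_forall_not_hasNashDeviation {pref : N → Finset N → Finset N → Prop}
    {π : HPartition N} : NashStable pref π ↔ ∀ i, ¬ HasNashDeviation pref π i := by
  simp [NashStable, HasNashDeviation]

theorem hasNashDeviation_of_sPref_singleton {pref : N → Finset N → Finset N → Prop}
    {π : HPartition N} {i : N} (h : SPref pref i {i} (π.part i)) : HasNashDeviation pref π i :=
  ⟨∅, Or.inl rfl, (ne_empty_of_mem (π.mem_self i)).symm, by rwa [insert_empty]⟩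

variable {p p' : N → N → N → Prop} {π : HPartition N} {i : N}

theorem hasNashDeviation_modified_of_hasNashDeviation (hp : CompletePreorder p)
    (hp' : IsUnaccModification p p') (h : HasNashDeviation (BWeak p) π i) :
    HasNashDeviation (BWeak p') π i := by
  have hp'c := hp'.completePreorder hp
  obtain ⟨mY, hY⟩ := hp.exists_mem_maxSet i ((π.part i).erase i)
  by_cases hmY : unacc p i mY
  · have hcard := one_lt_card_of_mem_maxSet_erase (π.mem_self i) hY
      fun h => hp.not_unacc_self i (h ▸ hmY)
    obtain ⟨hiY, hYi⟩ := hp'.indiff_self_of_unacc hp hmY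
    apply hasNashDeviation_of_sPref_singleton
    rw [hp'c.sPref_bWeak_iff self_mem_maxSet_erase_singleton (hp'.mem_maxSet hp hY)]
    exact Or.inr ⟨hiY, hYi, by simpa using hcard⟩
  · obtain ⟨S, hS, hSi, hdev⟩ := h
    obtain ⟨mX, hX⟩ := hp.exists_mem_maxSet i ((insert i S).erase i)
    rw [hp.sPref_bWeak_iff hX hY] at hdev
    have hXY : p i mX mY := hdev.elim (·.1) (·.1)
    have hmX : ¬ unacc p i mX := fun h => h.2 (hp.trans hXY (hp.pref_self_of_not_unacc hmY))
    refine ⟨S, hS, hSi, ?_⟩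
    rw [hp'c.sPref_bWeak_iff (hp'.mem_maxSet hp hX) (hp'.mem_maxSet hp hY), strictP,
      hp'.iff_of_not_unacc hmX hmY, hp'.iff_of_not_unacc hmY hmX]
    exact hdev

theorem hasNashDeviation_of_hasNashDeviation_modified (hp : CompletePreorder p)
    (hp' : IsUnaccModification p p') (h : HasNashDeviation (BWeak p') π i) :
    HasNashDeviation (BWeak p) π i := by
  have hp'c := hp'.completePreorder hp
  obtain ⟨mY, hY⟩ := hp.exists_mem_maxSet i ((π.part i).erase i)
  by_cases hmY : unacc p i mY
  · apply hasNashDeviation_of_sPref_singleton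
    rw [hp.sPref_bWeak_iff self_mem_maxSet_erase_singleton hY]
    exact Or.inl hmY
  obtain ⟨S, hS, hSi, hdev⟩ := h
  obtain ⟨mX, hX⟩ := hp.exists_mem_maxSet i ((insert i S).erase i)
  rw [hp'c.sPref_bWeak_iff (hp'.mem_maxSet hp hX) (hp'.mem_maxSet hp hY)] at hdev
  have hYi := hp.pref_self_of_not_unacc hmY
  by_cases hmX : unacc p i mX
  · have hiX := (hp'.indiff_self_of_unacc hp hmX).1
    obtain ⟨hXY, -, hcard⟩ :
        p' i mX mY ∧ p' i mY mX ∧ (insert i S).card < (π.part i).card :=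
      hdev.resolve_left fun h => h.2 (hp'c.trans (hp'.pref_of_pref hp hYi) hiX)
    have hiY : p i i mY :=
      (hp'.iff_of_not_unacc (hp.not_unacc_self i) hmY).1 (hp'c.trans hiX hXY)
    have hX1 := one_lt_card_of_mem_maxSet_erase (mem_insert_self i S) hX
      fun h => hp.not_unacc_self i (h ▸ hmX)
    apply hasNashDeviation_of_sPref_singleton
    rw [hp.sPref_bWeak_iff self_mem_maxSet_erase_singleton hY]
    exact Or.inr ⟨hiY, hYi, by simp only [card_singleton]; omega⟩
  · refine ⟨S, hS, hSi, ?_⟩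
    rw [hp.sPref_bWeak_iff hX hY]
    rwa [strictP, hp'.iff_of_not_unacc hmX hmY, hp'.iff_of_not_unacc hmY hmX] at hdev

end Deviation

open Classical in
theorem b_unacc_modification_general {N : Type*} [DecidableEq N]
    (p p' : N → N → N → Prop) (hp : CompletePreorder p)
    (hp' : ∀ i j k, p' i j k ↔
      p i (if unacc p i j then i else j) (if unacc p i k then i else k)) :
    ∀ π : HPartition N, NashStable (BWeak p) π ↔ NashStable (BWeak p') π := fun π => by
  simp only [nashStable_iff_forall_not_hasNashDeviation]
  exact forall_congr' fun i => not_congr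
    ⟨hasNashDeviation_modified_of_hasNashDeviation hp hp',
      hasNashDeviation_of_hasNashDeviation_modified hp hp'⟩

open Classical in
/-- a partition is Nash stable in a B-hedonic game iff it is Nash
stable in the modified game where every unacceptable player is made exactly
indifferent to oneself. -/
theorem b_unacc_modification {N : Type*} [DecidableEq N] [Fintype N]
    (p p' : N → N → N → Prop) (hp : CompletePreorder p)
    (hp' : ∀ i j k, p' i j k ↔
      p i (if unacc p i j then i else j) (if unacc p i k then i else k)) :
    ∀ π : HPartition N, NashStable (BWeak p) π ↔ NashStable (BWeak p') π :=
  b_unacc_modification_general p p' hp hp'
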